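/- Let f : 𝒳 → ℝ be measurable, α ∈ (0,1], c > 0, and define g(x) = log E_x exp( 2c^{−1} |Z_0(f)|^α ). Assume there exist a measurable function V : 𝒳 → [0,∞), a set C ∈ ℬ and constants b ≥ 0, K > 0 such that V(x) ≤ K for all x ∈ C and, for every x ∈ 𝒳, ∫ exp(V(y)) P^m(x, dy) ≤ exp( V(x) − g(x) + b·1_C(x) ), where P^m is the m-step transition kernel. Then: (i) for every x ∈ 𝒳, E_x exp( Σ_{k=0}^{τ_C−1} g(X_{km}) ) ≤ exp( b·1_C(x) + V(x) ); and (ii) sup_{x∈C} ‖ Σ_{k=0}^{τ_C−1} |Z_k(f)|^α ‖_{ψ_1, P_x} ≤ max{ 1, (b+K)/log 2 } · c. -/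

import Mathlib

open MeasureTheory ProbabilityTheory Real
open scoped ENNReal

/-- Prepend a point to a trajectory. -/
def prependPath {𝒳 : Type*} (x : 𝒳) (ω : ℕ → 𝒳) : ℕ → 𝒳 :=
  fun n => Nat.casesOn n x fun k => ω k

/-- `Z_k(f) = Σ_{j=0}^{m−1} f(X_{km+j})` evaluated on a trajectory. -/
noncomputable def pathZ {𝒳 : Type*} (m : ℕ) (f : 𝒳 → ℝ) (k : ℕ) (ω : ℕ → 𝒳) : ℝ :=
  ∑ j ∈ Finset.range m, f (ω (k * m + j))

/-- The first return time `τ_C = inf{k ≥ 1 : X_{km} ∈ C}` of the `m`-skeleton to `C`,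
with values in `[0,∞]` (`inf ∅ = ∞`). -/
noncomputable def pathTau {𝒳 : Type*} (m : ℕ) (C : Set 𝒳) (ω : ℕ → 𝒳) : ℝ≥0∞ :=
  sInf {c : ℝ≥0∞ | ∃ j : ℕ, c = j ∧ 1 ≤ j ∧ ω (j * m) ∈ C}

/-- `Σ_{k=0}^{τ−1} u_k`, interpreted in `[0,∞]`. -/
noncomputable def sumBefore (τ : ℝ≥0∞) (u : ℕ → ℝ≥0∞) : ℝ≥0∞ :=
  ∑' k : ℕ, if (k : ℝ≥0∞) < τ then u k else 0

/-- The exponential function on `[0,∞]`, with `exp ∞ = ∞`. -/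
noncomputable def expE (y : ℝ≥0∞) : ℝ≥0∞ :=
  if y = ⊤ then ⊤ else ENNReal.ofReal (Real.exp y.toReal)

/-- The exponential Orlicz norm `‖Y‖_{ψ_α,Q}` of a `[0,∞]`-valued variable
(with `inf ∅ = ∞`). -/
noncomputable def psiNormE {Ω : Type*} [MeasurableSpace Ω] (Q : Measure Ω) (α : ℝ)
    (Y : Ω → ℝ≥0∞) : ℝ≥0∞ :=
  sInf {c : ℝ≥0∞ | ∃ r : ℝ, 0 < r ∧ c = ENNReal.ofReal r ∧
    ∫⁻ ω, expE (Y ω ^ α / ENNReal.ofReal (r ^ α)) ∂Q ≤ 2}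

/-!
Along the `m`-skeleton, consider the products `Π_n = ∏_{k < min(n, τ_C)} ψ(θ_{km} ω)` of a
weight `ψ` of the first block. If `L ≥ 1` and `E_x[ψ · (1 on C, L(X_m) off C)] ≤ L(x)` for all
`x`, then the Markov property at time `m` and induction on `n` give `E_x Π_n ≤ L(x)`.
With `ψ = e^{g(X_0)}` and `L = e^{V + b 1_C}` the hypothesis is the multiplicative drift
condition, and monotone convergence gives (i). With `ψ = e^{2|Z_0|^α/c − g(X_0)}` and `L = 1`
it is the definition of `g`. For (ii), `|Z_k|^α/(Mc)` is `θ = 1/(2M)` times the sum of these two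
exponents, so Hölder and Jensen bound `E_x exp(Σ_{k<τ_C} |Z_k|^α/(Mc))` by `e^{θ(b+K)} ≤ 2`
for `x ∈ C`.
-/

lemma expE_eq_ereal_exp (y : ℝ≥0∞) : expE y = EReal.exp y := by
  unfold expE
  split_ifs with h
  · simp [h]
  · lift y to NNReal using h
    simp [EReal.coe_nnreal_eq_coe_real]

lemma expE_add (a b : ℝ≥0∞) : expE (a + b) = expE a * expE b := by
  simp only [expE_eq_ereal_exp, EReal.coe_ennreal_add, EReal.exp_add]

lemma expE_zero : expE 0 = 1 := by simp [expE_eq_ereal_exp]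

lemma one_le_expE (a : ℝ≥0∞) : 1 ≤ expE a := by simp [expE_eq_ereal_exp, EReal.coe_ennreal_nonneg]

lemma expE_ofReal {t : ℝ} (ht : 0 ≤ t) : expE (ENNReal.ofReal t) = ENNReal.ofReal (Real.exp t) := by
  rw [expE_eq_ereal_exp, EReal.coe_ennreal_ofReal, max_eq_left ht, EReal.exp_coe]

lemma expE_sum {ι : Type*} (s : Finset ι) (a : ι → ℝ≥0∞) :
    expE (∑ i ∈ s, a i) = ∏ i ∈ s, expE (a i) := by
  induction s using Finset.cons_induction with
  | empty => simp [expE_zero]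
  | cons i s hi ih => rw [Finset.sum_cons, Finset.prod_cons, expE_add, ih]

lemma continuous_expE : Continuous expE := by
  simp only [funext expE_eq_ereal_exp]
  exact ENNReal.continuous_exp.comp continuous_coe_ennreal_ereal

lemma expE_iSup {ι : Type*} [Nonempty ι] (a : ι → ℝ≥0∞) : expE (⨆ i, a i) = ⨆ i, expE (a i) :=
  Monotone.map_ciSup_of_continuousAt continuous_expE.continuousAt
    fun x y h => by simpa [expE_eq_ereal_exp] using h

lemma expE_tsum (a : ℕ → ℝ≥0∞) : expE (∑' k, a k) = ⨆ n, ∏ k ∈ Finset.range n, expE (a k) := by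
  simp only [ENNReal.tsum_eq_iSup_nat, expE_iSup, expE_sum]

lemma nonneg_of_lintegral_ofReal_exp_eq {Ω : Type*} [MeasurableSpace Ω] {μ : Measure Ω}
    [IsProbabilityMeasure μ] {F : Ω → ℝ} (hF : ∀ ω, 0 ≤ F ω) {t : ℝ}
    (h : ∫⁻ ω, ENNReal.ofReal (Real.exp (F ω)) ∂μ = ENNReal.ofReal (Real.exp t)) : 0 ≤ t := by
  have h1 : ∫⁻ _, (1 : ℝ≥0∞) ∂μ ≤ ENNReal.ofReal (Real.exp t) :=
    h ▸ lintegral_mono fun ω => ENNReal.one_le_ofReal.2 (Real.one_le_exp (hF ω))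
  simpa using h1

lemma lintegral_rpow_le_rpow_lintegral {Ω : Type*} [MeasurableSpace Ω] {μ : Measure Ω}
    [IsProbabilityMeasure μ] {f : Ω → ℝ≥0∞} (hf : AEMeasurable f μ) {s : ℝ} (hs0 : 0 ≤ s)
    (hs1 : s ≤ 1) : ∫⁻ ω, f ω ^ s ∂μ ≤ (∫⁻ ω, f ω ∂μ) ^ s := by
  simpa using ENNReal.lintegral_mul_norm_pow_le hf aemeasurable_const hs0 (sub_nonneg.2 hs1)
    (add_sub_cancel s 1) (g := fun _ => 1)

lemma lintegral_rpow_mul_rpow_le {Ω : Type*} [MeasurableSpace Ω] {μ : Measure Ω}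
    [IsProbabilityMeasure μ] {f g : Ω → ℝ≥0∞} (hf : AEMeasurable f μ) (hg : AEMeasurable g μ)
    {a b : ℝ} (ha : 0 ≤ a) (hb : 0 ≤ b) (hab : a + b ≤ 1) :
    ∫⁻ ω, f ω ^ a * g ω ^ b ∂μ ≤ (∫⁻ ω, f ω ∂μ) ^ a * (∫⁻ ω, g ω ∂μ) ^ b := by
  rcases (add_nonneg ha hb).eq_or_lt with hab0 | hab0
  · obtain ⟨rfl, rfl⟩ : a = 0 ∧ b = 0 := ⟨by linarith, by linarith⟩
    simp
  set t := a + b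
  have hsplit : ∀ ω, f ω ^ a * g ω ^ b = (f ω ^ (a / t) * g ω ^ (b / t)) ^ t := fun ω => by
    rw [ENNReal.mul_rpow_of_nonneg _ _ hab0.le, ← ENNReal.rpow_mul, ← ENNReal.rpow_mul,
      div_mul_cancel₀ _ hab0.ne', div_mul_cancel₀ _ hab0.ne']
  calc ∫⁻ ω, f ω ^ a * g ω ^ b ∂μ = ∫⁻ ω, (f ω ^ (a / t) * g ω ^ (b / t)) ^ t ∂μ := by
        simp only [hsplit]
    _ ≤ (∫⁻ ω, f ω ^ (a / t) * g ω ^ (b / t) ∂μ) ^ t :=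
        lintegral_rpow_le_rpow_lintegral ((hf.pow_const _).mul (hg.pow_const _)) hab0.le hab
    _ ≤ ((∫⁻ ω, f ω ∂μ) ^ (a / t) * (∫⁻ ω, g ω ∂μ) ^ (b / t)) ^ t := by
        gcongr
        exact ENNReal.lintegral_mul_norm_pow_le hf hg (by positivity) (by positivity)
          (by rw [← add_div, div_self hab0.ne'])
    _ = (∫⁻ ω, f ω ∂μ) ^ a * (∫⁻ ω, g ω ∂μ) ^ b := by
        rw [ENNReal.mul_rpow_of_nonneg _ _ hab0.le, ← ENNReal.rpow_mul, ← ENNReal.rpow_mul,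
          div_mul_cancel₀ _ hab0.ne', div_mul_cancel₀ _ hab0.ne']

lemma expE_sumBefore (τ : ℝ≥0∞) (a : ℕ → ℝ≥0∞) :
    expE (sumBefore τ a) = ⨆ n, ∏ k ∈ Finset.range n, if (k : ℝ≥0∞) < τ then expE (a k) else 1 := by
  simp only [sumBefore, expE_tsum, apply_ite expE, expE_zero]

lemma sumBefore_div (τ : ℝ≥0∞) (a : ℕ → ℝ≥0∞) (r : ℝ≥0∞) :
    sumBefore τ a / r = sumBefore τ fun k => a k / r := by
  simp only [sumBefore, div_eq_mul_inv, ← ENNReal.tsum_mul_right, ite_mul, zero_mul]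

section Paths

variable {𝒳 : Type*}

def shiftPath (m : ℕ) (ω : ℕ → 𝒳) : ℕ → 𝒳 := fun n => ω (n + m)

@[simp]
lemma shiftPath_zero (ω : ℕ → 𝒳) : shiftPath 0 ω = ω := rfl

lemma shiftPath_shiftPath (k m : ℕ) (ω : ℕ → 𝒳) :
    shiftPath k (shiftPath m ω) = shiftPath (k + m) ω := by
  funext n
  simp only [shiftPath, add_assoc]

lemma pathZ_zero_shiftPath (m : ℕ) (f : 𝒳 → ℝ) (k : ℕ) (ω : ℕ → 𝒳) :
    pathZ m f 0 (shiftPath (k * m) ω) = pathZ m f k ω := by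
  unfold pathZ shiftPath
  refine Finset.sum_congr rfl fun j _ => ?_
  rw [zero_mul, zero_add, add_comm]

lemma pathZ_dependsOn (m : ℕ) (f : 𝒳 → ℝ) : DependsOn (pathZ m f 0) (Set.Iic m) := by
  intro ω ω' h
  refine Finset.sum_congr rfl fun j hj => ?_
  rw [zero_mul, zero_add, h j (Set.mem_Iic.2 (Finset.mem_range.1 hj).le)]

variable [MeasurableSpace 𝒳]

lemma measurable_shiftPath (m : ℕ) : Measurable (shiftPath (𝒳 := 𝒳) m) :=
  measurable_pi_lambda _ fun n => measurable_pi_apply (n + m)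

lemma measurable_prependPath (x : 𝒳) : Measurable (prependPath x) :=
  measurable_pi_lambda _ fun
    | 0 => measurable_const
    | k + 1 => measurable_pi_apply k

lemma measurable_pathZ (m : ℕ) {f : 𝒳 → ℝ} (hf : Measurable f) (k : ℕ) :
    Measurable (pathZ m f k) :=
  Finset.measurable_sum _ fun _ _ => hf.comp (measurable_pi_apply _)

end Paths

section ReturnTime

variable {𝒳 : Type*} (m : ℕ) (C : Set 𝒳)

lemma natCast_lt_pathTau_iff (ω : ℕ → 𝒳) (k : ℕ) :
    (k : ℝ≥0∞) < pathTau m C ω ↔ ∀ j, 1 ≤ j → j ≤ k → ω (j * m) ∉ C := by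
  constructor
  · intro h j hj1 hjk hjC
    have := h.trans_le (sInf_le ⟨j, rfl, hj1, hjC⟩)
    exact absurd (Nat.cast_lt.1 this) (by omega)
  · intro h
    refine (Nat.cast_lt.2 k.lt_succ_self).trans_le (le_sInf ?_)
    rintro _ ⟨j, rfl, hj1, hjC⟩
    exact Nat.cast_le.2 (not_le.1 fun hjk => h j hj1 hjk hjC)

lemma pathTau_pos (ω : ℕ → 𝒳) : 0 < pathTau m C ω := by
  simpa using (natCast_lt_pathTau_iff m C ω 0).2 fun _ hj1 hj0 => by omega

lemma natCast_lt_pathTau_iff_eq_zero {ω : ℕ → 𝒳} (hω : ω m ∈ C) (k : ℕ) :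
    (k : ℝ≥0∞) < pathTau m C ω ↔ k = 0 := by
  rw [natCast_lt_pathTau_iff]
  refine ⟨fun h => by_contra fun hk => h 1 le_rfl (by omega) (by simpa using hω), ?_⟩
  rintro rfl _ hj1 hj0
  omega

lemma natCast_succ_lt_pathTau_iff {ω : ℕ → 𝒳} (hω : ω m ∉ C) (k : ℕ) :
    ((k + 1 : ℕ) : ℝ≥0∞) < pathTau m C ω ↔ (k : ℝ≥0∞) < pathTau m C (shiftPath m ω) := by
  simp only [natCast_lt_pathTau_iff, shiftPath, ← Nat.succ_mul]
  constructor
  · exact fun h j _ hjk => h (j + 1) (by omega) (by omega)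
  · rintro h (_ | _ | j) hj1 hjk
    · omega
    · simpa using hω
    · exact h (j + 1) (by omega) (by omega)

lemma measurableSet_natCast_lt_pathTau [MeasurableSpace 𝒳] (hC : MeasurableSet C) (k : ℕ) :
    MeasurableSet {ω : ℕ → 𝒳 | (k : ℝ≥0∞) < pathTau m C ω} := by
  simp only [natCast_lt_pathTau_iff, Set.ofPred_forall]
  exact MeasurableSet.iInter fun j => MeasurableSet.iInter fun _ => MeasurableSet.iInter fun _ =>
    hC.compl.preimage (measurable_pi_apply (j * m))

end ReturnTime

section Excursion

open scoped Classical

variable {𝒳 : Type*} (m : ℕ) (C : Set 𝒳)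

noncomputable def excursionProd (ψ : (ℕ → 𝒳) → ℝ≥0∞) (n : ℕ) (ω : ℕ → 𝒳) : ℝ≥0∞ :=
  ∏ k ∈ Finset.range n, if (k : ℝ≥0∞) < pathTau m C ω then ψ (shiftPath (k * m) ω) else 1

@[simp]
lemma excursionProd_zero (ψ : (ℕ → 𝒳) → ℝ≥0∞) (ω : ℕ → 𝒳) : excursionProd m C ψ 0 ω = 1 := by
  simp [excursionProd]

lemma excursionProd_succ (ψ : (ℕ → 𝒳) → ℝ≥0∞) (n : ℕ) (ω : ℕ → 𝒳) :
    excursionProd m C ψ (n + 1) ω =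
      ψ ω * if ω m ∈ C then 1 else excursionProd m C ψ n (shiftPath m ω) := by
  rw [excursionProd, Finset.prod_range_succ', Nat.cast_zero, if_pos (pathTau_pos m C ω), zero_mul,
    shiftPath_zero, mul_comm]
  congr 1
  split_ifs with hω
  · refine Finset.prod_eq_one fun k _ => if_neg ?_
    rw [natCast_lt_pathTau_iff_eq_zero m C hω]
    exact k.succ_ne_zero
  · refine Finset.prod_congr rfl fun k _ => if_congr (natCast_succ_lt_pathTau_iff m C hω k) ?_ rfl
    rw [shiftPath_shiftPath, Nat.succ_mul]

lemma excursionProd_mul (ψ χ : (ℕ → 𝒳) → ℝ≥0∞) (n : ℕ) (ω : ℕ → 𝒳) :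
    excursionProd m C (fun η => ψ η * χ η) n ω =
      excursionProd m C ψ n ω * excursionProd m C χ n ω := by
  simp only [excursionProd, ← Finset.prod_mul_distrib]
  exact Finset.prod_congr rfl fun k _ => by split_ifs <;> simp

lemma excursionProd_rpow (ψ : (ℕ → 𝒳) → ℝ≥0∞) {θ : ℝ} (hθ : 0 ≤ θ) (n : ℕ) (ω : ℕ → 𝒳) :
    excursionProd m C (fun η => ψ η ^ θ) n ω = excursionProd m C ψ n ω ^ θ := by
  simp only [excursionProd, ← ENNReal.prod_rpow_of_nonneg hθ]
  exact Finset.prod_congr rfl fun k _ => by split_ifs <;> simp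

lemma monotone_excursionProd {ψ : (ℕ → 𝒳) → ℝ≥0∞} (hψ : ∀ ω, 1 ≤ ψ ω) (ω : ℕ → 𝒳) :
    Monotone fun n => excursionProd m C ψ n ω := by
  refine monotone_nat_of_le_succ fun n => ?_
  simp only [excursionProd, Finset.prod_range_succ]
  refine le_mul_of_one_le_right' ?_
  split_ifs
  exacts [hψ _, le_rfl]

lemma expE_sumBefore_pathTau (a : (ℕ → 𝒳) → ℝ≥0∞) (ω : ℕ → 𝒳) :
    expE (sumBefore (pathTau m C ω) fun k => a (shiftPath (k * m) ω)) =
      ⨆ n, excursionProd m C (fun η => expE (a η)) n ω := by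
  rw [expE_sumBefore]
  rfl

variable [MeasurableSpace 𝒳]

lemma measurable_excursionProd (hC : MeasurableSet C) {ψ : (ℕ → 𝒳) → ℝ≥0∞} (hψ : Measurable ψ)
    (n : ℕ) : Measurable (excursionProd m C ψ n) :=
  Finset.measurable_prod _ fun k _ => Measurable.ite (measurableSet_natCast_lt_pathTau m C hC k)
    (hψ.comp (measurable_shiftPath _)) measurable_const

lemma lintegral_expE_sumBefore_pathTau {μ : Measure (ℕ → 𝒳)} (hC : MeasurableSet C)
    {a : (ℕ → 𝒳) → ℝ≥0∞} (ha : Measurable a) :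
    ∫⁻ ω, expE (sumBefore (pathTau m C ω) fun k => a (shiftPath (k * m) ω)) ∂μ =
      ⨆ n, ∫⁻ ω, excursionProd m C (fun η => expE (a η)) n ω ∂μ := by
  simp only [expE_sumBefore_pathTau]
  exact lintegral_iSup (measurable_excursionProd m C hC (continuous_expE.measurable.comp ha))
    fun _ _ h ω => monotone_excursionProd m C (fun _ => one_le_expE _) ω h

lemma lintegral_expE_sumBefore_div_ofReal {μ : Measure (ℕ → 𝒳)} (hC : MeasurableSet C)
    {Y : (ℕ → 𝒳) → ℝ} (hY : Measurable Y) (hY0 : ∀ ω, 0 ≤ Y ω) {r : ℝ} (hr : 0 < r) :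
    ∫⁻ ω, expE (sumBefore (pathTau m C ω) (fun k => ENNReal.ofReal (Y (shiftPath (k * m) ω)))
      / ENNReal.ofReal r) ∂μ =
      ⨆ n, ∫⁻ ω, excursionProd m C (fun η => ENNReal.ofReal (Real.exp (Y η / r))) n ω ∂μ := by
  simp only [sumBefore_div, ← ENNReal.ofReal_div_of_pos hr]
  rw [lintegral_expE_sumBefore_pathTau m C hC (a := fun ω => ENNReal.ofReal (Y ω / r))
    (by fun_prop)]
  simp only [expE_ofReal (div_nonneg (hY0 _) hr.le)]

end Excursion

section PathMeasure

open scoped Classical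

variable {𝒳 : Type*} [MeasurableSpace 𝒳] {κ : Kernel 𝒳 𝒳} {Pa : 𝒳 → Measure (ℕ → 𝒳)}
  (hPa_meas : Measurable Pa)
  (hPa : ∀ x, Pa x = (κ x).bind fun y => (Pa y).map (prependPath x))

include hPa_meas hPa

lemma lintegral_eq_lintegral_prependPath (x : 𝒳) {F : (ℕ → 𝒳) → ℝ≥0∞} (hF : Measurable F) :
    ∫⁻ ω, F ω ∂Pa x = ∫⁻ y, ∫⁻ ω, F (prependPath x ω) ∂Pa y ∂κ x := by
  have hmap : Measurable fun y => (Pa y).map (prependPath x) :=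
    (Measure.measurable_map _ (measurable_prependPath x)).comp hPa_meas
  rw [hPa x, Measure.lintegral_bind hmap.aemeasurable hF.aemeasurable]
  exact lintegral_congr fun y => lintegral_map hF (measurable_prependPath x)

lemma lintegral_apply_zero (x : 𝒳) {H : 𝒳 → (ℕ → 𝒳) → ℝ≥0∞}
    (hH : Measurable (Function.uncurry H)) :
    ∫⁻ ω, H (ω 0) ω ∂Pa x = ∫⁻ ω, H x ω ∂Pa x := by
  have h0 : Measurable fun ω : ℕ → 𝒳 => H (ω 0) ω := by fun_prop
  have hx : Measurable (H x) := by fun_prop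
  rw [lintegral_eq_lintegral_prependPath hPa_meas hPa x h0,
    lintegral_eq_lintegral_prependPath hPa_meas hPa x hx]
  rfl

omit hPa in
lemma measurable_lintegral_apply {T : (ℕ → 𝒳) → ℝ≥0∞} (hT : Measurable T) :
    Measurable fun y => ∫⁻ η, T η ∂Pa y :=
  (Measure.measurable_lintegral hT).comp hPa_meas

lemma lintegral_mul_comp_shiftPath [∀ x, IsProbabilityMeasure (Pa x)] (m : ℕ)
    {ψ T : (ℕ → 𝒳) → ℝ≥0∞} (hψ : Measurable ψ)
    (hψm : DependsOn ψ (Set.Iic m)) (hT : Measurable T) (x : 𝒳) :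
    ∫⁻ ω, ψ ω * T (shiftPath m ω) ∂Pa x = ∫⁻ ω, ψ ω * ∫⁻ η, T η ∂Pa (ω m) ∂Pa x := by
  have hET := measurable_lintegral_apply hPa_meas hT
  induction m generalizing ψ x with
  | zero =>
    have hψ0 : ∀ ω, ψ ω = ψ fun _ => ω 0 := fun ω => hψm fun i hi => by
      rw [Nat.le_zero.1 hi]
    have hψc : Measurable fun y : 𝒳 => ψ fun _ => y :=
      hψ.comp (measurable_pi_lambda _ fun _ => measurable_id)
    simp only [hψ0, shiftPath_zero]
    rw [lintegral_apply_zero hPa_meas hPa x (H := fun y ω => ψ (fun _ => y) * T ω)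
        ((hψc.comp measurable_fst).mul (hT.comp measurable_snd)),
      lintegral_apply_zero hPa_meas hPa x (H := fun y _ => ψ (fun _ => y) * ∫⁻ η, T η ∂Pa y)
        ((hψc.mul hET).comp measurable_fst),
      lintegral_const_mul _ hT, lintegral_const, measure_univ, mul_one]
  | succ m ih =>
    have hψx : DependsOn (fun ω => ψ (prependPath x ω)) (Set.Iic m) := fun ω ω' h =>
      hψm fun i hi => by
        cases i with
        | zero => rfl
        | succ i => exact h i (by simpa using hi)
    rw [lintegral_eq_lintegral_prependPath hPa_meas hPa x
        (F := fun ω => ψ ω * T (shiftPath (m + 1) ω)) (hψ.mul (hT.comp (measurable_shiftPath _))),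
      lintegral_eq_lintegral_prependPath hPa_meas hPa x
        (F := fun ω => ψ ω * ∫⁻ η, T η ∂Pa (ω (m + 1))) (hψ.mul (hET.comp (measurable_pi_apply _)))]
    exact lintegral_congr fun y => ih (hψ.comp (measurable_prependPath x)) hψx y

lemma lintegral_excursionProd_le [∀ x, IsProbabilityMeasure (Pa x)] {m : ℕ} {C : Set 𝒳}
    (hC : MeasurableSet C) {ψ : (ℕ → 𝒳) → ℝ≥0∞} (hψ : Measurable ψ)
    (hψm : DependsOn ψ (Set.Iic m)) {L : 𝒳 → ℝ≥0∞} (hL : ∀ x, 1 ≤ L x)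
    (hdrift : ∀ x, ∫⁻ ω, ψ ω * (if ω m ∈ C then 1 else L (ω m)) ∂Pa x ≤ L x) (n : ℕ) (x : 𝒳) :
    ∫⁻ ω, excursionProd m C ψ n ω ∂Pa x ≤ L x := by
  induction n generalizing x with
  | zero => simpa using hL x
  | succ n ih =>
    have hprod := measurable_excursionProd m C hC hψ n
    set T : (ℕ → 𝒳) → ℝ≥0∞ := fun η => if η 0 ∈ C then 1 else excursionProd m C ψ n η
    have hT : Measurable T := Measurable.ite (measurable_pi_apply 0 hC) measurable_const hprod
    have hET : ∀ y, ∫⁻ η, T η ∂Pa y ≤ if y ∈ C then 1 else L y := fun y => by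
      rw [lintegral_apply_zero hPa_meas hPa y
        (H := fun z η => if z ∈ C then 1 else excursionProd m C ψ n η)
        (Measurable.ite (measurable_fst hC) measurable_const (hprod.comp measurable_snd))]
      split_ifs
      exacts [by simp, ih y]
    calc ∫⁻ ω, excursionProd m C ψ (n + 1) ω ∂Pa x = ∫⁻ ω, ψ ω * T (shiftPath m ω) ∂Pa x := by
          simp only [excursionProd_succ, T, shiftPath, zero_add]
      _ = ∫⁻ ω, ψ ω * ∫⁻ η, T η ∂Pa (ω m) ∂Pa x :=
          lintegral_mul_comp_shiftPath hPa_meas hPa m hψ hψm hT x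
      _ ≤ ∫⁻ ω, ψ ω * (if ω m ∈ C then 1 else L (ω m)) ∂Pa x :=
          lintegral_mono fun ω => mul_le_mul_right (hET _) _
      _ ≤ L x := hdrift x

end PathMeasure

section Drift

open scoped Classical

variable {𝒳 : Type*} [MeasurableSpace 𝒳] {κ : Kernel 𝒳 𝒳} {Pa : 𝒳 → Measure (ℕ → 𝒳)}
  [∀ x, IsProbabilityMeasure (Pa x)] (hPa_meas : Measurable Pa)
  (hPa : ∀ x, Pa x = (κ x).bind fun y => (Pa y).map (prependPath x))
  {m : ℕ} {C : Set 𝒳} (hC : MeasurableSet C) {g : 𝒳 → ℝ} (hgm : Measurable g)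

include hPa_meas hPa hC hgm

lemma lintegral_excursionProd_exp_le_of_drift {V : 𝒳 → ℝ} (hVm : Measurable V)
    (hV0 : ∀ x, 0 ≤ V x) {b : ℝ} (hb : 0 ≤ b)
    (hdrift : ∀ x, ∫⁻ ω, ENNReal.ofReal (Real.exp (V (ω m))) ∂(Pa x)
        ≤ ENNReal.ofReal (Real.exp (V x - g x + b * Set.indicator C (fun _ => 1) x)))
    (n : ℕ) (x : 𝒳) :
    ∫⁻ ω, excursionProd m C (fun ω => ENNReal.ofReal (Real.exp (g (ω 0)))) n ω ∂Pa x
      ≤ ENNReal.ofReal (Real.exp (b * Set.indicator C (fun _ => 1) x + V x)) := by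
  set L : 𝒳 → ℝ≥0∞ := fun x => ENNReal.ofReal (Real.exp (b * Set.indicator C (fun _ => 1) x + V x))
  have hL : ∀ x, 1 ≤ L x := fun x => ENNReal.one_le_ofReal.2 <| Real.one_le_exp <|
    add_nonneg (mul_nonneg hb (Set.indicator_nonneg (fun _ _ => zero_le_one) x)) (hV0 x)
  refine lintegral_excursionProd_le hPa_meas hPa hC (by fun_prop)
    (fun ω ω' h => by rw [h 0 (Nat.zero_le m)]) hL (fun x => ?_) n x
  have hLV : ∀ y, (if y ∈ C then 1 else L y) ≤ ENNReal.ofReal (Real.exp (V y)) := fun y => by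
    split_ifs with hy
    · exact ENNReal.one_le_ofReal.2 (Real.one_le_exp (hV0 y))
    · simp [L, hy]
  calc ∫⁻ ω, ENNReal.ofReal (Real.exp (g (ω 0))) * (if ω m ∈ C then 1 else L (ω m)) ∂Pa x
      ≤ ∫⁻ ω, ENNReal.ofReal (Real.exp (g (ω 0))) * ENNReal.ofReal (Real.exp (V (ω m))) ∂Pa x :=
        lintegral_mono fun ω => mul_le_mul_right (hLV _) _
    _ = ∫⁻ ω, ENNReal.ofReal (Real.exp (g x)) * ENNReal.ofReal (Real.exp (V (ω m))) ∂Pa x :=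
        lintegral_apply_zero hPa_meas hPa x
          (H := fun y ω => ENNReal.ofReal (Real.exp (g y)) * ENNReal.ofReal (Real.exp (V (ω m))))
          (by fun_prop)
    _ = ENNReal.ofReal (Real.exp (g x)) * ∫⁻ ω, ENNReal.ofReal (Real.exp (V (ω m))) ∂Pa x :=
        lintegral_const_mul _ (by fun_prop)
    _ ≤ ENNReal.ofReal (Real.exp (g x)) *
          ENNReal.ofReal (Real.exp (V x - g x + b * Set.indicator C (fun _ => 1) x)) :=
        mul_le_mul_right (hdrift x) _
    _ = L x := by
        rw [← ENNReal.ofReal_mul (Real.exp_pos _).le, ← Real.exp_add]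
        congr 2
        ring

lemma lintegral_excursionProd_exp_sub_le_one {F : (ℕ → 𝒳) → ℝ} (hF : Measurable F)
    (hFm : DependsOn F (Set.Iic m))
    (hg : ∀ x, ∫⁻ ω, ENNReal.ofReal (Real.exp (F ω)) ∂Pa x = ENNReal.ofReal (Real.exp (g x)))
    (n : ℕ) (x : 𝒳) :
    ∫⁻ ω, excursionProd m C (fun ω => ENNReal.ofReal (Real.exp (F ω - g (ω 0)))) n ω ∂Pa x ≤ 1 := by
  refine lintegral_excursionProd_le hPa_meas hPa hC (by fun_prop)
    (fun ω ω' h => by rw [hFm h, h 0 (Nat.zero_le m)]) (fun _ => le_rfl) (fun x => le_of_eq ?_) n x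
  calc ∫⁻ ω, ENNReal.ofReal (Real.exp (F ω - g (ω 0))) * (if ω m ∈ C then 1 else 1) ∂Pa x
      = ∫⁻ ω, ENNReal.ofReal (Real.exp (F ω - g x)) ∂Pa x := by
        simp only [ite_self, mul_one]
        exact lintegral_apply_zero hPa_meas hPa x
          (H := fun y ω => ENNReal.ofReal (Real.exp (F ω - g y))) (by fun_prop)
    _ = ∫⁻ ω, ENNReal.ofReal (Real.exp (F ω)) * ENNReal.ofReal (Real.exp (-g x)) ∂Pa x := by
        simp only [← ENNReal.ofReal_mul (Real.exp_pos _).le, ← Real.exp_add, sub_eq_add_neg]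
    _ = 1 := by
        rw [lintegral_mul_const _ (by fun_prop), hg x, ← ENNReal.ofReal_mul (Real.exp_pos _).le,
          ← Real.exp_add, add_neg_cancel, Real.exp_zero, ENNReal.ofReal_one]

lemma lintegral_expE_sumBefore_le_of_drift (hg0 : ∀ x, 0 ≤ g x) {V : 𝒳 → ℝ}
    (hVm : Measurable V) (hV0 : ∀ x, 0 ≤ V x) {b : ℝ} (hb : 0 ≤ b)
    (hdrift : ∀ x, ∫⁻ ω, ENNReal.ofReal (Real.exp (V (ω m))) ∂(Pa x)
        ≤ ENNReal.ofReal (Real.exp (V x - g x + b * Set.indicator C (fun _ => 1) x)))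
    (x : 𝒳) :
    ∫⁻ ω, expE (sumBefore (pathTau m C ω) fun k => ENNReal.ofReal (g (ω (k * m)))) ∂(Pa x)
      ≤ ENNReal.ofReal (Real.exp (b * Set.indicator C (fun _ => 1) x + V x)) := by
  have h := lintegral_expE_sumBefore_pathTau m C hC (μ := Pa x)
    (a := fun ω => ENNReal.ofReal (g (ω 0))) (by fun_prop)
  simp only [shiftPath, zero_add, expE_ofReal (hg0 _)] at h
  rw [h]
  exact iSup_le fun n =>
    lintegral_excursionProd_exp_le_of_drift hPa_meas hPa hC hgm hVm hV0 hb hdrift n x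

lemma lintegral_excursionProd_exp_div_le_two {Y : (ℕ → 𝒳) → ℝ} (hY : Measurable Y)
    (hYm : DependsOn Y (Set.Iic m)) {c : ℝ} (hc : 0 < c)
    (hg : ∀ x, ∫⁻ ω, ENNReal.ofReal (Real.exp (2 / c * Y ω)) ∂Pa x
        = ENNReal.ofReal (Real.exp (g x)))
    {V : 𝒳 → ℝ} (hVm : Measurable V) (hV0 : ∀ x, 0 ≤ V x) {b K : ℝ} (hb : 0 ≤ b)
    (hVK : ∀ x ∈ C, V x ≤ K)
    (hdrift : ∀ x, ∫⁻ ω, ENNReal.ofReal (Real.exp (V (ω m))) ∂(Pa x)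
        ≤ ENNReal.ofReal (Real.exp (V x - g x + b * Set.indicator C (fun _ => 1) x)))
    {x : 𝒳} (hx : x ∈ C) {M : ℝ} (hM1 : 1 ≤ M) (hM : (b + K) / Real.log 2 ≤ M) (n : ℕ) :
    ∫⁻ ω, excursionProd m C (fun η => ENNReal.ofReal (Real.exp (Y η / (M * c)))) n ω ∂Pa x
      ≤ 2 := by
  set θ : ℝ := 1 / (2 * M)
  have hθ : 0 < θ := by positivity
  set ψA : (ℕ → 𝒳) → ℝ≥0∞ := fun ω => ENNReal.ofReal (Real.exp (2 / c * Y ω - g (ω 0)))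
  set ψg : (ℕ → 𝒳) → ℝ≥0∞ := fun ω => ENNReal.ofReal (Real.exp (g (ω 0)))
  have hsplit : ∀ ω, ENNReal.ofReal (Real.exp (Y ω / (M * c))) = ψA ω ^ θ * ψg ω ^ θ := by
    intro ω
    rw [← ENNReal.mul_rpow_of_nonneg _ _ hθ.le, ← ENNReal.ofReal_mul (Real.exp_pos _).le,
      ← Real.exp_add, ENNReal.ofReal_rpow_of_pos (Real.exp_pos _), ← Real.exp_mul]
    congr 2
    simp only [θ]
    field_simp
    ring
  have hA : ∫⁻ ω, excursionProd m C ψA n ω ∂Pa x ≤ 1 :=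
    lintegral_excursionProd_exp_sub_le_one hPa_meas hPa hC hgm (by fun_prop)
      (fun ω ω' h => by rw [hYm h]) hg n x
  have hG : ∫⁻ ω, excursionProd m C ψg n ω ∂Pa x ≤ ENNReal.ofReal (Real.exp (b + K)) := by
    refine (lintegral_excursionProd_exp_le_of_drift hPa_meas hPa hC hgm hVm hV0 hb hdrift n
      x).trans ?_
    rw [Set.indicator_of_mem hx]
    exact ENNReal.ofReal_le_ofReal (Real.exp_le_exp.2 (by linarith [hVK x hx]))
  have hθK : (b + K) * θ ≤ Real.log 2 := by
    rw [div_le_iff₀ (Real.log_pos one_lt_two)] at hM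
    calc (b + K) * θ ≤ M * Real.log 2 * θ := by gcongr
      _ ≤ Real.log 2 := by simp only [θ]; field_simp; nlinarith [Real.log_pos one_lt_two]
  simp only [hsplit, excursionProd_mul, excursionProd_rpow m C _ hθ.le]
  calc ∫⁻ ω, excursionProd m C ψA n ω ^ θ * excursionProd m C ψg n ω ^ θ ∂Pa x
      ≤ (∫⁻ ω, excursionProd m C ψA n ω ∂Pa x) ^ θ *
          (∫⁻ ω, excursionProd m C ψg n ω ∂Pa x) ^ θ :=
        lintegral_rpow_mul_rpow_le (measurable_excursionProd m C hC (by fun_prop) n).aemeasurable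
          (measurable_excursionProd m C hC (by fun_prop) n).aemeasurable hθ.le hθ.le
          (by simp only [θ]; field_simp; linarith)
    _ ≤ 1 ^ θ * ENNReal.ofReal (Real.exp (b + K)) ^ θ := by gcongr
    _ = ENNReal.ofReal (Real.exp ((b + K) * θ)) := by
        rw [ENNReal.one_rpow, one_mul, ENNReal.ofReal_rpow_of_pos (Real.exp_pos _), ← Real.exp_mul]
    _ ≤ 2 := by
        calc ENNReal.ofReal (Real.exp ((b + K) * θ)) ≤ ENNReal.ofReal (Real.exp (Real.log 2)) := by
              gcongr
          _ = 2 := by rw [Real.exp_log two_pos, ENNReal.ofReal_ofNat]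

end Drift

theorem stmt_15_general {𝒳 : Type*} [MeasurableSpace 𝒳]
    (κ : Kernel 𝒳 𝒳)
    (Pa : 𝒳 → Measure (ℕ → 𝒳)) [∀ x, IsProbabilityMeasure (Pa x)]
    (hPa_meas : Measurable Pa)
    (hPa : ∀ x, Pa x = (κ x).bind fun y => (Pa y).map (prependPath x))
    (m : ℕ)
    (f : 𝒳 → ℝ) (hf : Measurable f)
    (α c : ℝ) (hc : 0 < c)
    (g : 𝒳 → ℝ) (hgm : Measurable g)
    (hg : ∀ x, ∫⁻ ω, ENNReal.ofReal (Real.exp (2 / c * |pathZ m f 0 ω| ^ α)) ∂(Pa x)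
        = ENNReal.ofReal (Real.exp (g x)))
    (V : 𝒳 → ℝ) (hVm : Measurable V) (hV0 : ∀ x, 0 ≤ V x)
    (C : Set 𝒳) (hC : MeasurableSet C)
    (b K : ℝ) (hb : 0 ≤ b) (hVK : ∀ x ∈ C, V x ≤ K)
    (hdrift : ∀ x, ∫⁻ ω, ENNReal.ofReal (Real.exp (V (ω m))) ∂(Pa x)
        ≤ ENNReal.ofReal (Real.exp (V x - g x + b * Set.indicator C (fun _ => 1) x))) :
    (∀ x, ∫⁻ ω, expE (sumBefore (pathTau m C ω)
            fun k => ENNReal.ofReal (g (ω (k * m)))) ∂(Pa x)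
        ≤ ENNReal.ofReal (Real.exp (b * Set.indicator C (fun _ => 1) x + V x))) ∧
    (⨆ x ∈ C, psiNormE (Pa x) 1
        (fun ω => sumBefore (pathTau m C ω)
          fun k => ENNReal.ofReal (|pathZ m f k ω| ^ α)))
      ≤ ENNReal.ofReal (max 1 ((b + K) / Real.log 2) * c) := by
  have hY : Measurable fun ω => |pathZ m f 0 ω| ^ α := (measurable_pathZ m hf 0).abs.pow_const α
  have hY0 : ∀ ω, 0 ≤ |pathZ m f 0 ω| ^ α := fun ω => by positivity
  have hg0 : ∀ x, 0 ≤ g x := fun x =>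
    nonneg_of_lintegral_ofReal_exp_eq (fun ω => mul_nonneg (by positivity) (hY0 ω)) (hg x)
  refine ⟨lintegral_expE_sumBefore_le_of_drift hPa_meas hPa hC hgm hg0 hVm hV0 hb hdrift,
    iSup₂_le fun x hx => ?_⟩
  have hMc : 0 < max 1 ((b + K) / Real.log 2) * c := by positivity
  refine sInf_le ⟨_, hMc, rfl, ?_⟩
  have h := lintegral_expE_sumBefore_div_ofReal m C hC (μ := Pa x) hY hY0 hMc
  simp only [pathZ_zero_shiftPath] at h
  simp only [ENNReal.rpow_one, Real.rpow_one]
  rw [h]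
  exact iSup_le <| lintegral_excursionProd_exp_div_le_two hPa_meas hPa hC hgm hY
    (fun ω ω' h => by simp only [pathZ_dependsOn m f h]) hc hg hVm hV0 hb hVK hdrift hx
    (le_max_left _ _) (le_max_right _ _)

/-- Theorem (multiplicative drift ⇒ exponential integrability of excursions):
if `g(x) = log E_x exp(2c^{−1}|Z_0(f)|^α)` satisfies the multiplicative drift condition
`P^m(e^V)(x) ≤ exp(V(x) − g(x) + b 1_C(x))` with `V ≤ K` on `C`, then
(i) `E_x exp(Σ_{k<τ_C} g(X_{km})) ≤ exp(b 1_C(x) + V(x))` for all `x`, and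
(ii) `sup_{x∈C} ‖Σ_{k<τ_C} |Z_k(f)|^α‖_{ψ_1,P_x} ≤ max{1, (b+K)/log 2}·c`.
Here `Pa x` is the Ionescu–Tulcea path measure of the canonical chain started at `x`,
characterized by the recursion `hPa`. -/
theorem stmt_15 {𝒳 : Type*} [MeasurableSpace 𝒳]
    (κ : Kernel 𝒳 𝒳) [IsMarkovKernel κ]
    (Pa : 𝒳 → Measure (ℕ → 𝒳)) [∀ x, IsProbabilityMeasure (Pa x)]
    (hPa_meas : Measurable Pa)
    (hPa : ∀ x, Pa x = (κ x).bind fun y => (Pa y).map (prependPath x))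
    (m : ℕ) (hm : 1 ≤ m)
    (f : 𝒳 → ℝ) (hf : Measurable f)
    (α c : ℝ) (hα : 0 < α) (hα1 : α ≤ 1) (hc : 0 < c)
    (g : 𝒳 → ℝ) (hgm : Measurable g)
    (hg : ∀ x, ∫⁻ ω, ENNReal.ofReal (Real.exp (2 / c * |pathZ m f 0 ω| ^ α)) ∂(Pa x)
        = ENNReal.ofReal (Real.exp (g x)))
    (V : 𝒳 → ℝ) (hVm : Measurable V) (hV0 : ∀ x, 0 ≤ V x)
    (C : Set 𝒳) (hC : MeasurableSet C)
    (b K : ℝ) (hb : 0 ≤ b) (hK : 0 < K) (hVK : ∀ x ∈ C, V x ≤ K)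
    (hdrift : ∀ x, ∫⁻ ω, ENNReal.ofReal (Real.exp (V (ω m))) ∂(Pa x)
        ≤ ENNReal.ofReal (Real.exp (V x - g x + b * Set.indicator C (fun _ => 1) x))) :
    (∀ x, ∫⁻ ω, expE (sumBefore (pathTau m C ω)
            fun k => ENNReal.ofReal (g (ω (k * m)))) ∂(Pa x)
        ≤ ENNReal.ofReal (Real.exp (b * Set.indicator C (fun _ => 1) x + V x))) ∧
    (⨆ x ∈ C, psiNormE (Pa x) 1
        (fun ω => sumBefore (pathTau m C ω)
          fun k => ENNReal.ofReal (|pathZ m f k ω| ^ α)))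
      ≤ ENNReal.ofReal (max 1 ((b + K) / Real.log 2) * c) :=
  stmt_15_general κ Pa hPa_meas hPa m f hf α c hc g hgm hg V hVm hV0 C hC b K hb hVK hdrift
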